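/- Let (R,H) be a commutative Hopf algebroid over a field k and x : R → k a k-algebra character. Then the base-changed k-algebra k_x ⊗_R H ⊗_R k_x (where the left R-action on H is via t and the right via s) carries a natural structure of commutative Hopf k-algebra, with unit induced by the unit of H, multiplication from H, counit h ↦ x(ε(h)), comultiplication induced by Δ, and antipode induced by S. -/

import Mathlib

/-- A commutative Hopf algebroid `(R, H)` over a field (or commutative ring) `k`.
The comultiplication is encoded universally: `H2` plays the role of `H ⊗_R H`
(`H` as an `R`-bimodule via the target `t` on the left and the source `s` on the right),
presented by the two canonical algebra maps `i₁, i₂ : H → H2` (`h ↦ h ⊗ 1`, `h ↦ 1 ⊗ h`)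
satisfying `i₁ ∘ s = i₂ ∘ t` together with its universal property: algebra maps out of
`H2` correspond to pairs `(g, f)` of algebra maps out of `H` with `g ∘ s = f ∘ t`.
With this encoding `lift g f ∘ Δ` is the convolution `h ↦ Σ g(h₁) f(h₂)`. -/
structure CommHopfAlgebroid (k R H : Type) [CommRing k] [CommRing R] [CommRing H]
    [Algebra k R] [Algebra k H] where
  /-- the source -/
  s : R →ₐ[k] H
  /-- the target -/
  t : R →ₐ[k] H
  /-- the counit -/
  ε : H →ₐ[k] R
  counit_s : ε.comp s = AlgHom.id k R
  counit_t : ε.comp t = AlgHom.id k R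
  /-- the carrier of `H ⊗_R H` -/
  H2 : Type
  [h2ring : CommRing H2]
  [h2alg : Algebra k H2]
  i₁ : H →ₐ[k] H2
  i₂ : H →ₐ[k] H2
  compat : i₁.comp s = i₂.comp t
  /-- universal property of `H ⊗_R H`: pairs `(g,f)` with `g ∘ s = f ∘ t` lift -/
  lift : ∀ {A : Type} [CommRing A] [Algebra k A] (g f : H →ₐ[k] A),
      g.comp s = f.comp t → (H2 →ₐ[k] A)
  lift_comp_i₁ : ∀ {A : Type} [CommRing A] [Algebra k A] (g f : H →ₐ[k] A)
      (hgf : g.comp s = f.comp t), (lift g f hgf).comp i₁ = g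
  lift_comp_i₂ : ∀ {A : Type} [CommRing A] [Algebra k A] (g f : H →ₐ[k] A)
      (hgf : g.comp s = f.comp t), (lift g f hgf).comp i₂ = f
  lift_unique : ∀ {A : Type} [CommRing A] [Algebra k A] (g f : H →ₐ[k] A)
      (hgf : g.comp s = f.comp t) (u : H2 →ₐ[k] A),
      u.comp i₁ = g → u.comp i₂ = f → u = lift g f hgf
  /-- the comultiplication `Δ : H → H ⊗_R H` -/
  Δ : H →ₐ[k] H2
  Δ_comp_t : Δ.comp t = i₁.comp t
  Δ_comp_s : Δ.comp s = i₂.comp s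
  /-- coassociativity, tested on points in any commutative `k`-algebra `A` -/
  coassoc : ∀ {A : Type} [CommRing A] [Algebra k A] (u v w : H →ₐ[k] A)
      (huv : u.comp s = v.comp t) (hvw : v.comp s = w.comp t)
      (h₁ : ((lift u v huv).comp Δ).comp s = w.comp t)
      (h₂ : u.comp s = ((lift v w hvw).comp Δ).comp t),
      (lift ((lift u v huv).comp Δ) w h₁).comp Δ =
        (lift u ((lift v w hvw).comp Δ) h₂).comp Δ
  /-- left counit law: `t(ε(h₁)) h₂ = h` -/
  counit_left : ∀ (h : (t.comp ε).comp s = (AlgHom.id k H).comp t),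
      (lift (t.comp ε) (AlgHom.id k H) h).comp Δ = AlgHom.id k H
  /-- right counit law: `h₁ s(ε(h₂)) = h` -/
  counit_right : ∀ (h : (AlgHom.id k H).comp s = (s.comp ε).comp t),
      (lift (AlgHom.id k H) (s.comp ε) h).comp Δ = AlgHom.id k H
  /-- the antipode -/
  antipode : H →ₐ[k] H
  antipode_s : antipode.comp s = t
  antipode_t : antipode.comp t = s
  antipode_invol : antipode.comp antipode = AlgHom.id k H
  /-- antipode identity `m (S ⊗ id) Δ = s ∘ ε` -/
  antipode_left : ∀ (h : antipode.comp s = (AlgHom.id k H).comp t),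
      (lift antipode (AlgHom.id k H) h).comp Δ = s.comp ε
  /-- antipode identity `m (id ⊗ S) Δ = t ∘ ε` -/
  antipode_right : ∀ (h : (AlgHom.id k H).comp s = antipode.comp t),
      (lift (AlgHom.id k H) antipode h).comp Δ = t.comp ε

attribute [instance] CommHopfAlgebroid.h2ring CommHopfAlgebroid.h2alg

/-!
Each structure map of `T` is induced through the universal property of `j` by the corresponding
structure map of `H`, and each Hopf algebra axiom is checked after precomposing with `j`, where it
becomes the corresponding Hopf algebroid axiom. The point is that for any algebra map `φ` out of
`T ⊗ T`, `φ ∘ comul ∘ j` is the convolution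
`lift (φ ∘ includeLeft ∘ j) (φ ∘ includeRight ∘ j) ∘ Δ`, because `lift` is natural in its target.
-/

namespace CommHopfAlgebroid

variable {k R H : Type} [CommRing k] [CommRing R] [CommRing H] [Algebra k R] [Algebra k H]
  (𝓗 : CommHopfAlgebroid k R H) {A B : Type} [CommRing A] [Algebra k A] [CommRing B]
  [Algebra k B]

theorem comp_lift {φ : A →ₐ[k] B} {g f : H →ₐ[k] A} {g' f' : H →ₐ[k] B}
    (h : g.comp 𝓗.s = f.comp 𝓗.t) (h' : g'.comp 𝓗.s = f'.comp 𝓗.t)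
    (hg : φ.comp g = g') (hf : φ.comp f = f') :
    φ.comp (𝓗.lift g f h) = 𝓗.lift g' f' h' :=
  𝓗.lift_unique _ _ _ _ (by rw [AlgHom.comp_assoc, 𝓗.lift_comp_i₁, hg])
    (by rw [AlgHom.comp_assoc, 𝓗.lift_comp_i₂, hf])

theorem lift_comp_Δ_comp_s (g f : H →ₐ[k] A) (h : g.comp 𝓗.s = f.comp 𝓗.t) :
    ((𝓗.lift g f h).comp 𝓗.Δ).comp 𝓗.s = f.comp 𝓗.s := by
  rw [AlgHom.comp_assoc, 𝓗.Δ_comp_s, ← AlgHom.comp_assoc, 𝓗.lift_comp_i₂]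

theorem lift_comp_Δ_comp_t (g f : H →ₐ[k] A) (h : g.comp 𝓗.s = f.comp 𝓗.t) :
    ((𝓗.lift g f h).comp 𝓗.Δ).comp 𝓗.t = g.comp 𝓗.t := by
  rw [AlgHom.comp_assoc, 𝓗.Δ_comp_t, ← AlgHom.comp_assoc, 𝓗.lift_comp_i₁]

/-- `j : H → T` presents `k_x ⊗_R H ⊗_R k_x`. -/
structure IsBaseChangeAt (x : R →ₐ[k] k) {T : Type} [CommRing T] [Algebra k T]
    (j : H →ₐ[k] T) : Prop where
  comp_s : j.comp 𝓗.s = (Algebra.ofId k T).comp x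
  comp_t : j.comp 𝓗.t = (Algebra.ofId k T).comp x
  univ : ∀ (A : Type) [CommRing A] [Algebra k A] (u : H →ₐ[k] A),
    u.comp 𝓗.s = (Algebra.ofId k A).comp x → u.comp 𝓗.t = (Algebra.ofId k A).comp x →
    ∃! w : T →ₐ[k] A, w.comp j = u

namespace IsBaseChangeAt

open scoped TensorProduct
open Algebra.TensorProduct

variable {𝓗} {x : R →ₐ[k] k} {T : Type} [CommRing T] [Algebra k T] {j : H →ₐ[k] T}
  (hj : 𝓗.IsBaseChangeAt x j)
include hj

theorem comp_s_apply (r : R) : j (𝓗.s r) = algebraMap k T (x r) :=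
  DFunLike.congr_fun hj.comp_s r

theorem comp_t_apply (r : R) : j (𝓗.t r) = algebraMap k T (x r) :=
  DFunLike.congr_fun hj.comp_t r

theorem comp_comp_s (φ : T →ₐ[k] A) : (φ.comp j).comp 𝓗.s = (Algebra.ofId k A).comp x := by
  rw [AlgHom.comp_assoc, hj.comp_s, ← AlgHom.comp_assoc, Algebra.comp_ofId]

theorem comp_comp_t (φ : T →ₐ[k] A) : (φ.comp j).comp 𝓗.t = (Algebra.ofId k A).comp x := by
  rw [AlgHom.comp_assoc, hj.comp_t, ← AlgHom.comp_assoc, Algebra.comp_ofId]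

theorem compat (φ ψ : T →ₐ[k] A) : (φ.comp j).comp 𝓗.s = (ψ.comp j).comp 𝓗.t :=
  (hj.comp_comp_s φ).trans (hj.comp_comp_t ψ).symm

theorem hom_ext {w₁ w₂ : T →ₐ[k] A} (h : w₁.comp j = w₂.comp j) : w₁ = w₂ :=
  (hj.univ A _ (hj.comp_comp_s w₁) (hj.comp_comp_t w₁)).unique rfl h.symm

noncomputable def desc (u : H →ₐ[k] A) (hs : u.comp 𝓗.s = (Algebra.ofId k A).comp x)
    (ht : u.comp 𝓗.t = (Algebra.ofId k A).comp x) : T →ₐ[k] A :=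
  (hj.univ A u hs ht).exists.choose

theorem desc_comp (u : H →ₐ[k] A) (hs : u.comp 𝓗.s = (Algebra.ofId k A).comp x)
    (ht : u.comp 𝓗.t = (Algebra.ofId k A).comp x) : (hj.desc u hs ht).comp j = u :=
  (hj.univ A u hs ht).exists.choose_spec

noncomputable def comul : T →ₐ[k] T ⊗[k] T :=
  hj.desc ((𝓗.lift (includeLeft.comp j) (includeRight.comp j) (hj.compat _ _)).comp 𝓗.Δ)
    (by rw [lift_comp_Δ_comp_s]; exact hj.comp_comp_s _)
    (by rw [lift_comp_Δ_comp_t]; exact hj.comp_comp_t _)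

noncomputable def counit : T →ₐ[k] k :=
  hj.desc (x.comp 𝓗.ε)
    (by rw [AlgHom.comp_assoc, 𝓗.counit_s]; rfl) (by rw [AlgHom.comp_assoc, 𝓗.counit_t]; rfl)

noncomputable def antipode : T →ₐ[k] T :=
  hj.desc (j.comp 𝓗.antipode) (by rw [AlgHom.comp_assoc, 𝓗.antipode_s, hj.comp_t])
    (by rw [AlgHom.comp_assoc, 𝓗.antipode_t, hj.comp_s])

theorem comul_comp (hc) : hj.comul.comp j =
    (𝓗.lift (includeLeft.comp j) (includeRight.comp j) hc).comp 𝓗.Δ :=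
  hj.desc_comp _ _ _

theorem counit_comp : hj.counit.comp j = x.comp 𝓗.ε := hj.desc_comp _ _ _

theorem antipode_comp : hj.antipode.comp j = j.comp 𝓗.antipode := hj.desc_comp _ _ _

theorem counit_apply (a : H) : hj.counit (j a) = x (𝓗.ε a) :=
  DFunLike.congr_fun hj.counit_comp a

theorem antipode_apply (a : H) : hj.antipode (j a) = j (𝓗.antipode a) :=
  DFunLike.congr_fun hj.antipode_comp a

theorem comp_comul_comp_eq_lift {φ : T ⊗[k] T →ₐ[k] A} {g f : H →ₐ[k] A}
    (h : g.comp 𝓗.s = f.comp 𝓗.t) (hg : (φ.comp includeLeft).comp j = g)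
    (hf : (φ.comp includeRight).comp j = f) :
    (φ.comp hj.comul).comp j = (𝓗.lift g f h).comp 𝓗.Δ := by
  rw [AlgHom.comp_assoc, hj.comul_comp (hj.compat _ _), ← AlgHom.comp_assoc,
    𝓗.comp_lift _ h (by rw [← AlgHom.comp_assoc, hg]) (by rw [← AlgHom.comp_assoc, hf])]

theorem comp_comul_comp_eq_comp_lift {ψ : T ⊗[k] T →ₐ[k] A} {u : H →ₐ[k] A}
    {g f : H →ₐ[k] H}
    (h : g.comp 𝓗.s = f.comp 𝓗.t) (hg : (ψ.comp includeLeft).comp j = u.comp g)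
    (hf : (ψ.comp includeRight).comp j = u.comp f) :
    (ψ.comp hj.comul).comp j = u.comp ((𝓗.lift g f h).comp 𝓗.Δ) := by
  rw [← AlgHom.comp_assoc,
    𝓗.comp_lift h (by rw [AlgHom.comp_assoc, h, AlgHom.comp_assoc]) rfl rfl]
  exact hj.comp_comul_comp_eq_lift _ hg hf

theorem coassoc :
    (Algebra.TensorProduct.assoc k k k T T T : _ ≃ₐ[k] _).toAlgHom.comp
        ((map hj.comul (AlgHom.id k T)).comp hj.comul) =
      (map (AlgHom.id k T) hj.comul).comp hj.comul := by
  let u : H →ₐ[k] T ⊗[k] (T ⊗[k] T) := includeLeft.comp j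
  let v : H →ₐ[k] T ⊗[k] (T ⊗[k] T) := (includeRight.comp includeLeft).comp j
  let w : H →ₐ[k] T ⊗[k] (T ⊗[k] T) := (includeRight.comp includeRight).comp j
  have huv : u.comp 𝓗.s = v.comp 𝓗.t := hj.compat _ _
  have hvw : v.comp 𝓗.s = w.comp 𝓗.t := hj.compat _ _
  have h₁ : ((𝓗.lift u v huv).comp 𝓗.Δ).comp 𝓗.s = w.comp 𝓗.t := by
    rw [lift_comp_Δ_comp_s]; exact hj.compat _ _
  have h₂ : u.comp 𝓗.s = ((𝓗.lift v w hvw).comp 𝓗.Δ).comp 𝓗.t := by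
    rw [lift_comp_Δ_comp_t]; exact hj.compat _ _
  apply hj.hom_ext
  rw [← AlgHom.comp_assoc, hj.comp_comul_comp_eq_lift h₁ ?lhs₁ ?lhs₂,
    hj.comp_comul_comp_eq_lift h₂ ?rhs₁ ?rhs₂]
  · exact 𝓗.coassoc u v w huv hvw h₁ h₂
  case lhs₁ =>
    have : ((Algebra.TensorProduct.assoc k k k T T T : _ ≃ₐ[k] _).toAlgHom.comp
        (map hj.comul (AlgHom.id k T))).comp includeLeft =
        (map (AlgHom.id k T) includeLeft).comp hj.comul := by
      rw [AlgHom.comp_assoc, map_comp_includeLeft, ← AlgHom.comp_assoc]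
      congr 1
      ext <;> simp [one_def]
    rw [this]
    exact hj.comp_comul_comp_eq_lift huv (by ext; simp [u]) (by ext; simp [v])
  case lhs₂ => ext; simp [w, one_def]
  case rhs₁ => ext; simp [u]
  case rhs₂ =>
    rw [map_comp_includeRight]
    exact hj.comp_comul_comp_eq_lift hvw (by ext; simp [v]) (by ext; simp [w])

theorem lid_comp_counit_comul :
    (Algebra.TensorProduct.lid k T : _ ≃ₐ[k] _).toAlgHom.comp
        ((map hj.counit (AlgHom.id k T)).comp hj.comul) = AlgHom.id k T := by
  have h₀ : (𝓗.t.comp 𝓗.ε).comp 𝓗.s = (AlgHom.id k H).comp 𝓗.t := by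
    rw [AlgHom.comp_assoc, 𝓗.counit_s, AlgHom.comp_id, AlgHom.id_comp]
  apply hj.hom_ext
  rw [← AlgHom.comp_assoc, hj.comp_comul_comp_eq_comp_lift (u := j) h₀ ?_ ?_,
    𝓗.counit_left, AlgHom.comp_id, AlgHom.id_comp]
  · ext a; simp [hj.counit_apply, hj.comp_t_apply, Algebra.algebraMap_eq_smul_one]
  · ext a; simp

theorem rid_comp_counit_comul :
    (Algebra.TensorProduct.rid k k T : _ ≃ₐ[k] _).toAlgHom.comp
        ((map (AlgHom.id k T) hj.counit).comp hj.comul) = AlgHom.id k T := by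
  have h₀ : (AlgHom.id k H).comp 𝓗.s = (𝓗.s.comp 𝓗.ε).comp 𝓗.t := by
    rw [AlgHom.comp_assoc, 𝓗.counit_t, AlgHom.comp_id, AlgHom.id_comp]
  apply hj.hom_ext
  rw [← AlgHom.comp_assoc, hj.comp_comul_comp_eq_comp_lift (u := j) h₀ ?_ ?_,
    𝓗.counit_right, AlgHom.comp_id, AlgHom.id_comp]
  · ext a; simp
  · ext a; simp [hj.counit_apply, hj.comp_s_apply, Algebra.algebraMap_eq_smul_one]

theorem lmul'_comp_antipode_comul :
    (lmul' k).comp ((map hj.antipode (AlgHom.id k T)).comp hj.comul) =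
      (Algebra.ofId k T).comp hj.counit := by
  have h₀ : 𝓗.antipode.comp 𝓗.s = (AlgHom.id k H).comp 𝓗.t := by
    rw [𝓗.antipode_s, AlgHom.id_comp]
  apply hj.hom_ext
  rw [← AlgHom.comp_assoc, hj.comp_comul_comp_eq_comp_lift (u := j) h₀ ?_ ?_,
    𝓗.antipode_left, AlgHom.comp_assoc, hj.counit_comp, ← AlgHom.comp_assoc, hj.comp_s,
    AlgHom.comp_assoc]
  · ext a; simp [hj.antipode_apply]
  · ext a; simp

theorem lmul'_comp_comul_antipode :
    (lmul' k).comp ((map (AlgHom.id k T) hj.antipode).comp hj.comul) =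
      (Algebra.ofId k T).comp hj.counit := by
  have h₀ : (AlgHom.id k H).comp 𝓗.s = 𝓗.antipode.comp 𝓗.t := by
    rw [𝓗.antipode_t, AlgHom.id_comp]
  apply hj.hom_ext
  rw [← AlgHom.comp_assoc, hj.comp_comul_comp_eq_comp_lift (u := j) h₀ ?_ ?_,
    𝓗.antipode_right, AlgHom.comp_assoc, hj.counit_comp, ← AlgHom.comp_assoc, hj.comp_t,
    AlgHom.comp_assoc]
  · ext a; simp
  · ext a; simp [hj.antipode_apply]

end IsBaseChangeAt

end CommHopfAlgebroid

open Algebra.TensorProduct in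
/-- Let `(R,H)` be a commutative Hopf algebroid over `k` and `x : R → k` a character.
Let `T` (together with `j : H → T`) present the base change `k_x ⊗_R H ⊗_R k_x`: `j`
coequalizes `s` and `t` against the `k`-point `x`, universally.  Then `T` carries a
natural structure of commutative Hopf `k`-algebra: there are a comultiplication
`T → T ⊗_k T`, a counit `T → k` and an antipode `T → T` (all algebra maps) satisfying
the Hopf algebra axioms, induced respectively by `Δ`, `x ∘ ε` and `S`. -/
theorem stmt18 (k R H : Type) [Field k] [CommRing R] [CommRing H]
    [Algebra k R] [Algebra k H] (𝓗 : CommHopfAlgebroid k R H)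
    (x : R →ₐ[k] k) (T : Type) [CommRing T] [Algebra k T] (j : H →ₐ[k] T)
    (hjs : j.comp 𝓗.s = (Algebra.ofId k T).comp x)
    (hjt : j.comp 𝓗.t = (Algebra.ofId k T).comp x)
    (huniv : ∀ (A : Type) [CommRing A] [Algebra k A] (u : H →ₐ[k] A),
        u.comp 𝓗.s = (Algebra.ofId k A).comp x →
        u.comp 𝓗.t = (Algebra.ofId k A).comp x →
        ∃! w : T →ₐ[k] A, w.comp j = u) :
    ∃ (comul : T →ₐ[k] TensorProduct k T T) (counit : T →ₐ[k] k) (antip : T →ₐ[k] T),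
      -- coassociativity
      ((Algebra.TensorProduct.assoc k k k T T T : _ ≃ₐ[k] _).toAlgHom.comp
          ((Algebra.TensorProduct.map comul (AlgHom.id k T)).comp comul) =
        (Algebra.TensorProduct.map (AlgHom.id k T) comul).comp comul) ∧
      -- counit laws
      ((Algebra.TensorProduct.lid k T : _ ≃ₐ[k] _).toAlgHom.comp
          ((Algebra.TensorProduct.map counit (AlgHom.id k T)).comp comul) =
        AlgHom.id k T) ∧
      ((Algebra.TensorProduct.rid k k T : _ ≃ₐ[k] _).toAlgHom.comp
          ((Algebra.TensorProduct.map (AlgHom.id k T) counit).comp comul) =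
        AlgHom.id k T) ∧
      -- antipode identities
      ((Algebra.TensorProduct.lmul' k).comp
          ((Algebra.TensorProduct.map antip (AlgHom.id k T)).comp comul) =
        (Algebra.ofId k T).comp counit) ∧
      ((Algebra.TensorProduct.lmul' k).comp
          ((Algebra.TensorProduct.map (AlgHom.id k T) antip).comp comul) =
        (Algebra.ofId k T).comp counit) ∧
      -- the structure maps are induced by `ε`, `S` and `Δ`
      (counit.comp j = x.comp 𝓗.ε) ∧
      (antip.comp j = j.comp 𝓗.antipode) ∧
      (∀ hc : (Algebra.TensorProduct.includeLeft.comp j : H →ₐ[k] TensorProduct k T T).comp 𝓗.s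
          = ((Algebra.TensorProduct.includeRight.restrictScalars k).comp j
              : H →ₐ[k] TensorProduct k T T).comp 𝓗.t,
        comul.comp j =
          (𝓗.lift (Algebra.TensorProduct.includeLeft.comp j)
            ((Algebra.TensorProduct.includeRight.restrictScalars k).comp j) hc).comp
            𝓗.Δ) := by
  have hj : 𝓗.IsBaseChangeAt x j := ⟨hjs, hjt, huniv⟩
  exact ⟨hj.comul, hj.counit, hj.antipode, hj.coassoc, hj.lid_comp_counit_comul,
    hj.rid_comp_counit_comul, hj.lmul'_comp_antipode_comul, hj.lmul'_comp_comul_antipode,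
    hj.counit_comp, hj.antipode_comp, hj.comul_comp⟩
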